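/- arXiv:2511.06789 — 3 statements merged into one kernel-verified Lean document; each statement's English description precedes it below -/
import Mathlib

section
/- Let F : X → ℝ be a nonnegative function, g : X × ℝ → ℝ a function such that s ↦ g(x,s) is nondecreasing for every x, and h : ℝ → ℝ a nondecreasing function with h(s) ≤ g(x,s) for all x and s. Define f(x,s) = g(x,s)·1[F(x) ≥ s] + h(s)·1[0 ≤ F(x) < s] and let 𝓕 = {f(·,s) : s ∈ ℝ}. Then the subgraphs of 𝓕 cannot shatter any set of 4 points in X × ℝ; i.e., 𝓕 is a VC-subgraph class with VC dimension at most 3. -/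
/-- A class of real-valued functions shatters points `(x i, t i)` via subgraphs if for
every subset `I` of indices there is `f` in the class with `t i < f (x i)` exactly for `i ∈ I`. -/
def ShattersSubgraphs {X : Type*} (𝓕 : Set (X → ℝ)) {n : ℕ} (p : Fin n → X × ℝ) : Prop :=
  ∀ I : Finset (Fin n), ∃ f ∈ 𝓕, ∀ i : Fin n, ((p i).2 < f (p i).1 ↔ i ∈ I)

/-- The class `{f(·,s) : s ∈ ℝ}` with
`f(x,s) = g(x,s)·1[F(x) ≥ s] + h(s)·1[0 ≤ F(x) < s]` cannot shatter four points:
it is a VC-subgraph class of dimension at most 3. -/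
theorem stmt0 {X : Type*} (F : X → ℝ) (hF : ∀ x, 0 ≤ F x)
    (g : X → ℝ → ℝ) (hg : ∀ x, Monotone (g x))
    (h : ℝ → ℝ) (hh : Monotone h)
    (hhg : ∀ x s, h s ≤ g x s)
    (f : X → ℝ → ℝ)
    (hf : ∀ x s, f x s =
      g x s * (if s ≤ F x then 1 else 0) + h s * (if 0 ≤ F x ∧ F x < s then 1 else 0))
    (p : Fin 4 → X × ℝ) :
    ¬ ShattersSubgraphs (Set.range fun s => fun x => f x s) p := by
  classical
  intro hs
  have key : ∀ I : Finset (Fin 4), ∃ s : ℝ, ∀ i, ((p i).2 < f (p i).1 s ↔ i ∈ I) := by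
    intro I
    obtain ⟨f', hf', hprop⟩ := hs I
    obtain ⟨s, rfl⟩ := hf'
    exact ⟨s, hprop⟩
  choose sI hsI using key
  set c : ℝ → Finset (Fin 4) := fun r => Finset.univ.filter (fun i => (p i).2 < f (p i).1 r)
    with hc_def
  have hc : ∀ r i, i ∈ c r ↔ (p i).2 < f (p i).1 r := by
    intro r i; simp [hc_def]
  have hcs : ∀ I, c (sI I) = I := by
    intro I; ext i; rw [hc]; exact hsI I i
  have hinj : Function.Injective sI := by
    intro I J hIJ
    rw [← hcs I, ← hcs J, hIJ]
  have hfx : ∀ x s, f x s = if s ≤ F x then g x s else h s := by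
    intro x s
    rcases le_or_gt s (F x) with hle | hlt
    · rw [hf]; simp [hle, not_lt.mpr hle]
    · rw [hf]; simp [not_le.mpr hlt, hF x, hlt]
  have L : ∀ (i : Fin 4) (s1 s2 s3 s4 : ℝ), s1 ≤ s2 → s2 ≤ s3 → s3 ≤ s4 →
      i ∈ c s1 → i ∉ c s2 → i ∈ c s3 → i ∉ c s4 → False := by
    intro i s1 s2 s3 s4 h12 h23 h34 m1 m2 m3 m4
    rw [hc, hfx] at m1 m2 m3 m4
    by_cases h3F : s3 ≤ F (p i).1
    · have h2F : s2 ≤ F (p i).1 := le_trans h23 h3F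
      have h1F : s1 ≤ F (p i).1 := le_trans h12 h2F
      rw [if_pos h1F] at m1
      rw [if_pos h2F] at m2
      exact m2 (lt_of_lt_of_le m1 (hg _ h12))
    · have h4F : ¬ s4 ≤ F (p i).1 := fun hh4 => h3F (le_trans h34 hh4)
      rw [if_neg h3F] at m3
      rw [if_neg h4F] at m4
      exact m4 (lt_of_lt_of_le m3 (hh h34))
  set T : Finset ℝ := Finset.univ.image sI with hT_def
  have h16 : T.card = 16 := by
    rw [hT_def, Finset.card_image_of_injective _ hinj]
    simp
  set E : Fin 16 → ℝ := fun k => T.orderEmbOfFin h16 k with hE_def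
  have hEmono : StrictMono E := (T.orderEmbOfFin h16).strictMono
  have hEmem : ∀ k, ∃ I, sI I = E k := by
    intro k
    have hm : E k ∈ T := Finset.orderEmbOfFin_mem T h16 k
    rw [hT_def, Finset.mem_image] at hm
    obtain ⟨I, _, hI⟩ := hm
    exact ⟨I, hI⟩
  choose Ik hIk using hEmem
  have hcE : ∀ k, c (E k) = Ik k := fun k => by rw [← hIk k, hcs]
  have hIkinj : Function.Injective Ik := by
    intro k k' hkk'
    have hE : E k = E k' := by rw [← hIk k, ← hIk k', hkk']
    exact hEmono.injective hE
  set d : Fin 4 → Finset (Fin 15) := fun i =>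
    Finset.univ.filter (fun k => ¬ (i ∈ c (E k.castSucc) ↔ i ∈ c (E k.succ))) with hd_def
  have hd : ∀ i k, k ∈ d i ↔ ¬ (i ∈ c (E k.castSucc) ↔ i ∈ c (E k.succ)) := by
    intro i k; simp [hd_def]
  have hcover : ∀ k : Fin 15, ∃ i, k ∈ d i := by
    intro k
    have hne : c (E k.castSucc) ≠ c (E k.succ) := by
      intro hEq
      rw [hcE, hcE] at hEq
      have h1 := hIkinj hEq
      have hlt : (k.castSucc : Fin 16) < k.succ := (Fin.castSucc_lt_succ : k.castSucc < k.succ)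
      rw [h1] at hlt
      exact lt_irrefl _ hlt
    have h2 : ¬ ∀ i, (i ∈ c (E k.castSucc) ↔ i ∈ c (E k.succ)) :=
      fun hall => hne (Finset.ext hall)
    rw [not_forall] at h2
    obtain ⟨i, hi⟩ := h2
    exact ⟨i, (hd i k).mpr hi⟩
  have hdcard : ∀ i, (d i).card ≤ 3 := by
    intro i
    by_contra hlt
    push_neg at hlt
    have h4 : 4 ≤ (d i).card := hlt
    set m : Fin 4 ↪o Fin 15 := (d i).orderEmbOfCardLe h4 with hm_def
    have hmmem : ∀ j, m j ∈ d i := fun j => (d i).orderEmbOfCardLe_mem h4 j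
    -- T / F positions of each change pair
    set Tp : Fin 15 → Fin 16 := fun k => if i ∈ c (E k.castSucc) then k.castSucc else k.succ
      with hTp_def
    set Fp : Fin 15 → Fin 16 := fun k => if i ∈ c (E k.castSucc) then k.succ else k.castSucc
      with hFp_def
    have hTmem : ∀ k, k ∈ d i → i ∈ c (E (Tp k)) := by
      intro k hk
      rw [hd] at hk
      rw [hTp_def]
      by_cases hA : i ∈ c (E k.castSucc)
      · simpa [hA] using hA
      · simp only [hA, if_false]
        by_contra hB
        exact hk ⟨fun a => absurd a hA, fun b => absurd b hB⟩
    have hFmem : ∀ k, k ∈ d i → i ∉ c (E (Fp k)) := by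
      intro k hk
      rw [hd] at hk
      rw [hFp_def]
      by_cases hA : i ∈ c (E k.castSucc)
      · simp only [hA, if_true]
        intro hB
        exact hk ⟨fun _ => hB, fun _ => hA⟩
      · simpa [hA] using hA
    have hTle1 : ∀ k, (k.castSucc : Fin 16) ≤ Tp k ∧ Tp k ≤ k.succ := by
      intro k
      rw [hTp_def]
      by_cases hA : i ∈ c (E k.castSucc) <;>
        simp [hA, le_of_lt (Fin.castSucc_lt_succ : k.castSucc < k.succ)]
    have hFle1 : ∀ k, (k.castSucc : Fin 16) ≤ Fp k ∧ Fp k ≤ k.succ := by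
      intro k
      rw [hFp_def]
      by_cases hA : i ∈ c (E k.castSucc) <;>
        simp [hA, le_of_lt (Fin.castSucc_lt_succ : k.castSucc < k.succ)]
    have hsucc_le : ∀ k k' : Fin 15, k < k' → (k.succ : Fin 16) ≤ k'.castSucc := by
      intro k k' hkk'
      rw [Fin.lt_def] at hkk'
      rw [Fin.le_def]
      simp only [Fin.val_succ, Fin.coe_castSucc]
      omega
    have h01 : Tp (m 0) ≤ Fp (m 1) :=
      le_trans (hTle1 (m 0)).2 (le_trans (hsucc_le _ _ (m.strictMono (by decide)))
        (hFle1 (m 1)).1)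
    have h12 : Fp (m 1) ≤ Tp (m 2) :=
      le_trans (hFle1 (m 1)).2 (le_trans (hsucc_le _ _ (m.strictMono (by decide)))
        (hTle1 (m 2)).1)
    have h23 : Tp (m 2) ≤ Fp (m 3) :=
      le_trans (hTle1 (m 2)).2 (le_trans (hsucc_le _ _ (m.strictMono (by decide)))
        (hFle1 (m 3)).1)
    exact L i (E (Tp (m 0))) (E (Fp (m 1))) (E (Tp (m 2))) (E (Fp (m 3)))
      (hEmono.monotone h01) (hEmono.monotone h12) (hEmono.monotone h23)
      (hTmem _ (hmmem 0)) (hFmem _ (hmmem 1)) (hTmem _ (hmmem 2)) (hFmem _ (hmmem 3))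
  -- counting
  have hsub : (Finset.univ : Finset (Fin 15)) ⊆ (Finset.univ : Finset (Fin 4)).biUnion d := by
    intro k _
    obtain ⟨i, hi⟩ := hcover k
    exact Finset.mem_biUnion.mpr ⟨i, Finset.mem_univ i, hi⟩
  have h15 : (15 : ℕ) ≤ ((Finset.univ : Finset (Fin 4)).biUnion d).card := by
    have := Finset.card_le_card hsub
    simpa using this
  have h12' : ((Finset.univ : Finset (Fin 4)).biUnion d).card ≤ 12 := by
    calc ((Finset.univ : Finset (Fin 4)).biUnion d).card
        ≤ ∑ i, (d i).card := Finset.card_biUnion_le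
      _ ≤ ∑ _i : Fin 4, 3 := Finset.sum_le_sum (fun i _ => hdcard i)
      _ = 12 := by simp
  omega
end

section
/- Take X = [0,∞), F(x) = x, g(x,s) = s+2, h(s) = s−2, and f(x,s) = (s+2)·1[x ≥ s] + (s−2)·1[0 ≤ x < s]. Then the class 𝓕 = {f(·,s) : s ∈ ℝ} has VC-subgraph dimension exactly 3; in particular the three points (11/4, 9/4), (15/4, 13/4), (25/4, 21/4) in [0,∞) × ℝ are shattered by the subgraphs of 𝓕. -/
/-- The concrete function `f(x,s) = (s+2)·1[x ≥ s] + (s−2)·1[0 ≤ x < s]` on `X = [0,∞)`. -/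
noncomputable def fEx (s : ℝ) (x : {x : ℝ // 0 ≤ x}) : ℝ :=
  (s + 2) * (if s ≤ (x : ℝ) then 1 else 0) + (s - 2) * (if (x : ℝ) < s then 1 else 0)

open Finset

section Shattering

variable {X S : Type*} {n : ℕ}

theorem shattersSubgraphs_range_iff (F : S → X → ℝ) (p : Fin n → X × ℝ) :
    ShattersSubgraphs (Set.range F) p ↔
      ∀ I : Finset (Fin n), ∃ s, ∀ i, ((p i).2 < F s (p i).1 ↔ i ∈ I) := by
  simp only [ShattersSubgraphs, Set.exists_range_iff]

theorem lt_iff_lt_of_card_filter_lt_eq {α : Type*} [LinearOrder α] {B : Finset α} {s s' : α}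
    (h : #(B.filter (· < s)) = #(B.filter (· < s'))) {b : α} (hb : b ∈ B) :
    b < s ↔ b < s' := by
  wlog hss' : s ≤ s' generalizing s s'
  · exact (this h.symm (le_of_not_ge hss')).symm
  have hsub : B.filter (· < s) ⊆ B.filter (· < s') := fun c hc =>
    mem_filter.2 ⟨(mem_filter.1 hc).1, (mem_filter.1 hc).2.trans_le hss'⟩
  have heq := eq_of_subset_of_card_le hsub h.ge
  constructor
  · exact fun hbs => hbs.trans_le hss'
  · intro hbs'
    have hmem : b ∈ B.filter (· < s') := mem_filter.2 ⟨hb, hbs'⟩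
    rw [← heq] at hmem
    exact (mem_filter.1 hmem).2

theorem two_pow_le_card_add_one_of_shattersSubgraphs (F : ℝ → X → ℝ) (p : Fin n → X × ℝ)
    (B : Finset ℝ)
    (hB : ∀ i s s', (∀ b ∈ B, b < s ↔ b < s') →
      ((p i).2 < F s (p i).1 ↔ (p i).2 < F s' (p i).1))
    (hp : ShattersSubgraphs (Set.range F) p) :
    2 ^ n ≤ #B + 1 := by
  choose σ hσ using (shattersSubgraphs_range_iff F p).1 hp
  let cell : Finset (Fin n) → ℕ := fun I => #(B.filter (· < σ I))
  have hcell_inj : Set.InjOn cell (univ : Finset (Finset (Fin n))) := by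
    intro I _ J _ hIJ
    ext i
    rw [← hσ I i, ← hσ J i]
    exact hB i _ _ fun b hb => lt_iff_lt_of_card_filter_lt_eq hIJ hb
  have hcell_maps : Set.MapsTo cell (univ : Finset (Finset (Fin n))) (range (#B + 1)) :=
    fun I _ => mem_range.2 (Nat.lt_succ_of_le (card_filter_le _ _))
  simpa using card_le_card_of_injOn cell hcell_maps hcell_inj

end Shattering

theorem lt_fEx_iff (s t : ℝ) (x : {x : ℝ // 0 ≤ x}) :
    t < fEx s x ↔ t - 2 < s ∧ (s ≤ x ∨ t + 2 < s) := by
  unfold fEx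
  by_cases h : s ≤ (x : ℝ)
  · simp only [if_pos h, if_neg (not_lt.2 h)]
    constructor
    · exact fun _ => ⟨by linarith, Or.inl h⟩
    · exact fun ⟨_, _⟩ => by linarith
  · simp only [if_neg h, if_pos (lt_of_not_ge h)]
    constructor
    · exact fun _ => ⟨by linarith, Or.inr (by linarith)⟩
    · rintro ⟨_, h' | _⟩
      · exact absurd h' h
      · linarith

theorem three_mul_add_one_lt_two_pow {n : ℕ} (hn : 4 ≤ n) : 3 * n + 1 < 2 ^ n := by
  induction n, hn using Nat.le_induction with
  | base => norm_num
  | succ n hn ih => rw [pow_succ]; omega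

theorem not_shattersSubgraphs_fEx {n : ℕ} (hn : 4 ≤ n) (p : Fin n → {x : ℝ // 0 ≤ x} × ℝ) :
    ¬ ShattersSubgraphs (Set.range fEx) p := by
  intro hp
  let B : Finset ℝ := univ.biUnion fun i => {(p i).2 - 2, ((p i).1 : ℝ), (p i).2 + 2}
  have hB : ∀ i s s', (∀ b ∈ B, b < s ↔ b < s') →
      ((p i).2 < fEx s (p i).1 ↔ (p i).2 < fEx s' (p i).1) := by
    intro i s s' hss'
    have hmem : ∀ b ∈ ({(p i).2 - 2, ((p i).1 : ℝ), (p i).2 + 2} : Finset ℝ), b ∈ B :=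
      fun b hb => mem_biUnion.2 ⟨i, mem_univ i, hb⟩
    have h₁ := hss' ((p i).2 - 2) (hmem _ (by simp))
    have h₂ := hss' ((p i).1 : ℝ) (hmem _ (by simp))
    have h₃ := hss' ((p i).2 + 2) (hmem _ (by simp))
    simp only [lt_fEx_iff, h₁, h₃, ← not_lt, h₂]
  have hcard : #B ≤ 3 * n :=
    calc #B ≤ ∑ i : Fin n, #({(p i).2 - 2, ((p i).1 : ℝ), (p i).2 + 2} : Finset ℝ) :=
          card_biUnion_le
      _ ≤ ∑ _i : Fin n, 3 := sum_le_sum fun _ _ => card_le_three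
      _ = 3 * n := by simp [mul_comm]
  have := two_pow_le_card_add_one_of_shattersSubgraphs fEx p B hB hp
  have := three_mul_add_one_lt_two_pow hn
  omega

theorem shattersSubgraphs_fEx_three :
    ShattersSubgraphs (Set.range fEx)
      (![((⟨11/4, by norm_num⟩ : {x : ℝ // 0 ≤ x}), (9/4 : ℝ)),
         (⟨15/4, by norm_num⟩, 13/4),
         (⟨25/4, by norm_num⟩, 21/4)]) := by
  rw [shattersSubgraphs_range_iff]
  intro I
  -- The three points lie below `fEx s` for `s` in `(1/4, 11/4] ∪ (17/4, ∞)`,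
  -- `(5/4, 15/4] ∪ (21/4, ∞)` and `(13/4, 25/4] ∪ (29/4, ∞)` respectively.
  fin_cases I
  · exact ⟨0, by intro i; fin_cases i <;> norm_num [lt_fEx_iff]⟩
  · exact ⟨1, by intro i; fin_cases i <;> norm_num [lt_fEx_iff]⟩
  · exact ⟨3, by intro i; fin_cases i <;> norm_num [lt_fEx_iff]⟩
  · exact ⟨2, by intro i; fin_cases i <;> norm_num [lt_fEx_iff]⟩
  · exact ⟨4, by intro i; fin_cases i <;> norm_num [lt_fEx_iff]⟩
  · exact ⟨5, by intro i; fin_cases i <;> norm_num [lt_fEx_iff]⟩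
  · exact ⟨7/2, by intro i; fin_cases i <;> norm_num [lt_fEx_iff]⟩
  · exact ⟨6, by intro i; fin_cases i <;> norm_num [lt_fEx_iff]⟩

/-- The class `{f(·,s)}` has VC-subgraph dimension exactly 3: the three given points are
shattered, and no four points can be shattered. -/
theorem stmt1 :
    ShattersSubgraphs (Set.range fun s => fun x => fEx s x)
      (![((⟨11/4, by norm_num⟩ : {x : ℝ // 0 ≤ x}), (9/4 : ℝ)),
         (⟨15/4, by norm_num⟩, 13/4),
         (⟨25/4, by norm_num⟩, 21/4)]) ∧
    ∀ p : Fin 4 → {x : ℝ // 0 ≤ x} × ℝ,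
      ¬ ShattersSubgraphs (Set.range fun s => fun x => fEx s x) p :=
  ⟨shattersSubgraphs_fEx_three, not_shattersSubgraphs_fEx le_rfl⟩
end

section
/- Let X and Y be bounded real random variables. Then |Cov(X,Y)| ≤ 4 α(σ(X), σ(Y)) ‖X‖_∞ ‖Y‖_∞, where α(𝒜,ℬ) = sup{|P(A)P(B) − P(A∩B)| : A ∈ 𝒜, B ∈ ℬ} is the strong mixing coefficient. -/
open MeasureTheory ProbabilityTheory

/-- The strong (α-) mixing coefficient between two sub-σ-algebras, as a real number:
`α(𝒜,ℬ) = sup{|P(A)P(B) − P(A∩B)| : A ∈ 𝒜, B ∈ ℬ}`. -/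
noncomputable def alphaMixR {Ω : Type*} [m0 : MeasurableSpace Ω] (μ : Measure Ω)
    (m1 m2 : MeasurableSpace Ω) : ℝ :=
  sSup {r : ℝ | ∃ A B : Set Ω, MeasurableSet[m1] A ∧ MeasurableSet[m2] B ∧
    r = |(μ A).toReal * (μ B).toReal - (μ (A ∩ B)).toReal|}

lemma toReal_prob_le_one {Ω₁ : Type*} {mΩ : MeasurableSpace Ω₁} (μ : Measure Ω₁) [IsProbabilityMeasure μ] (s : Set Ω₁) : (μ s).toReal ≤ 1 := by
  have h : μ s ≤ 1 := by
    have h := measure_mono (μ := μ) (Set.subset_univ s)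
    rwa [measure_univ] at h
  simpa using (ENNReal.toReal_le_toReal (measure_ne_top μ s) ENNReal.one_ne_top).mpr h

/-- Pull-out lemma on integrals: `∫ φ ⬝ E[g|m] = ∫ φ g` for `φ` `m`-measurable. -/
lemma integral_mul_condexp_aux {Ω : Type*} {mΩ : MeasurableSpace Ω} {μ : Measure Ω}
    [IsFiniteMeasure μ] {m : MeasurableSpace Ω} (hm : m ≤ mΩ)
    {φ g : Ω → ℝ} (hφ : StronglyMeasurable[m] φ)
    (hφg : Integrable (fun ω => φ ω * g ω) μ)
    (hg : Integrable g μ) :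
    ∫ ω, φ ω * (μ[g|m]) ω ∂μ = ∫ ω, φ ω * g ω ∂μ := by
  have hφg' : Integrable (φ * g) μ := hφg
  have h1 := condExp_mul_of_stronglyMeasurable_left hφ hφg' hg
  have h2 : ∫ ω, (μ[φ * g|m]) ω ∂μ = ∫ ω, φ ω * g ω ∂μ := integral_condExp hm
  calc ∫ ω, φ ω * (μ[g|m]) ω ∂μ = ∫ ω, (μ[φ * g|m]) ω ∂μ :=
        (integral_congr_ae (h1.mono fun ω hω => hω)).symm
    _ = ∫ ω, φ ω * g ω ∂μ := h2

lemma alphaMixR_ge {Ω : Type*} {mΩ : MeasurableSpace Ω} {μ : Measure Ω}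
    [IsProbabilityMeasure μ] {m1 m2 : MeasurableSpace Ω} {A B : Set Ω}
    (hA : MeasurableSet[m1] A) (hB : MeasurableSet[m2] B) :
    |(μ A).toReal * (μ B).toReal - (μ (A ∩ B)).toReal| ≤ alphaMixR (m0 := mΩ) μ m1 m2 := by
  apply le_csSup
  · refine ⟨1, ?_⟩
    rintro r ⟨A', B', _, _, rfl⟩
    have h1 : ∀ s : Set Ω, (μ s).toReal ≤ 1 := fun s => toReal_prob_le_one (μ := μ) s
    have h0 : ∀ s : Set Ω, 0 ≤ (μ s).toReal := fun s => ENNReal.toReal_nonneg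
    rw [abs_le]
    constructor <;> nlinarith [h1 A', h1 B', h1 (A' ∩ B'), h0 A', h0 B', h0 (A' ∩ B')]
  · exact ⟨A, B, hA, hB, rfl⟩

lemma indicator_one_integrable {Ω : Type*} {mΩ : MeasurableSpace Ω} {μ : Measure Ω}
    [IsFiniteMeasure μ] {A : Set Ω} (hA : MeasurableSet[mΩ] A) :
    Integrable (A.indicator fun _ => (1 : ℝ)) μ :=
  (integrable_const 1).indicator hA

lemma integral_indicator_one' {Ω : Type*} {mΩ : MeasurableSpace Ω} {μ : Measure Ω}
    {A : Set Ω} (hA : MeasurableSet[mΩ] A) :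
    ∫ ω, A.indicator (fun _ => (1 : ℝ)) ω ∂μ = (μ A).toReal := by
  exact integral_indicator_one (μ := μ) hA

/-- Covariance inequality for strongly mixing random variables:
`|Cov(X,Y)| ≤ 4 α(σ(X),σ(Y)) ‖X‖_∞ ‖Y‖_∞`. -/
theorem stmt15 {Ω : Type*} [m0 : MeasurableSpace Ω] (μ : Measure Ω)
    [IsProbabilityMeasure μ] (X Y : Ω → ℝ)
    (hXm : Measurable X) (hYm : Measurable Y)
    (hX : MemLp X ⊤ μ) (hY : MemLp Y ⊤ μ) :
    |∫ ω, (X ω - ∫ a, X a ∂μ) * (Y ω - ∫ a, Y a ∂μ) ∂μ| ≤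
      4 * alphaMixR (m0 := m0) μ (MeasurableSpace.comap X inferInstance)
          (MeasurableSpace.comap Y inferInstance) *
        (eLpNorm X ⊤ μ).toReal * (eLpNorm Y ⊤ μ).toReal := by
  classical
  set m1 := MeasurableSpace.comap X inferInstance with hm1def
  set m2 := MeasurableSpace.comap Y inferInstance with hm2def
  have hm1 : m1 ≤ m0 := hXm.comap_le
  have hm2 : m2 ≤ m0 := hYm.comap_le
  haveI : SigmaFinite (μ.trim hm1) := inferInstance
  haveI : SigmaFinite (μ.trim hm2) := inferInstance
  set α := alphaMixR (m0 := m0) μ m1 m2 with hαdef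
  set a := ∫ ω, X ω ∂μ with hadef
  set b := ∫ ω, Y ω ∂μ with hbdef
  set Cx := (eLpNorm X ⊤ μ).toReal with hCxdef
  set Cy := (eLpNorm Y ⊤ μ).toReal with hCydef
  have hCx0 : 0 ≤ Cx := ENNReal.toReal_nonneg
  have hCy0 : 0 ≤ Cy := ENNReal.toReal_nonneg
  -- a.e. bounds
  have hXb : ∀ᵐ ω ∂μ, |X ω| ≤ Cx := by
    filter_upwards [enorm_ae_le_eLpNormEssSup X μ] with ω hω
    have hne : eLpNormEssSup X μ ≠ ⊤ := by
      have h2 := hX.2; rw [eLpNorm_exponent_top] at h2; exact h2.ne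
    calc |X ω| = ((‖X ω‖₊ : ENNReal)).toReal := by simp [Real.norm_eq_abs]
      _ ≤ (eLpNormEssSup X μ).toReal := ENNReal.toReal_mono hne hω
      _ = Cx := by rw [hCxdef, eLpNorm_exponent_top]
  have hYb : ∀ᵐ ω ∂μ, |Y ω| ≤ Cy := by
    filter_upwards [enorm_ae_le_eLpNormEssSup Y μ] with ω hω
    have hne : eLpNormEssSup Y μ ≠ ⊤ := by
      have h2 := hY.2; rw [eLpNorm_exponent_top] at h2; exact h2.ne
    calc |Y ω| = ((‖Y ω‖₊ : ENNReal)).toReal := by simp [Real.norm_eq_abs]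
      _ ≤ (eLpNormEssSup Y μ).toReal := ENNReal.toReal_mono hne hω
      _ = Cy := by rw [hCydef, eLpNorm_exponent_top]
  have hXb' : ∀ᵐ ω ∂μ, ‖X ω‖ ≤ Cx := by
    filter_upwards [hXb] with ω h using by rwa [Real.norm_eq_abs]
  have hYb' : ∀ᵐ ω ∂μ, ‖Y ω‖ ≤ Cy := by
    filter_upwards [hYb] with ω h using by rwa [Real.norm_eq_abs]
  -- integrability
  have hXi : Integrable X μ := hX.integrable le_top
  have hYi : Integrable Y μ := hY.integrable le_top
  set g : Ω → ℝ := fun ω => Y ω - b with hgdef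
  have hgi : Integrable g μ := hYi.sub (integrable_const b)
  have hg0 : ∫ ω, g ω ∂μ = 0 := by
    rw [hgdef]
    rw [integral_sub hYi (integrable_const b), integral_const, probReal_univ]
    simp [hbdef]
  have hXsm1 : StronglyMeasurable[m1] X :=
    (Measurable.of_comap_le le_rfl).stronglyMeasurable
  have hYsm2 : StronglyMeasurable[m2] Y :=
    (Measurable.of_comap_le le_rfl).stronglyMeasurable
  have hXg : Integrable (fun ω => X ω * g ω) μ := hgi.bdd_mul hX.aestronglyMeasurable hXb'
  -- conditional expectation of g on σ(X)
  set g1 := μ[g|m1] with hg1def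
  have hg1i : Integrable g1 μ := integrable_condExp
  have hg1sm : StronglyMeasurable[m1] g1 := stronglyMeasurable_condExp
  have E2 : ∫ ω, X ω * g1 ω ∂μ = ∫ ω, X ω * g ω ∂μ :=
    integral_mul_condexp_aux hm1 hXsm1 hXg hgi
  have hXg1 : Integrable (fun ω => X ω * g1 ω) μ := hg1i.bdd_mul hX.aestronglyMeasurable hXb'
  -- step E1
  have E1 : ∫ ω, (X ω - a) * (Y ω - b) ∂μ = ∫ ω, X ω * g ω ∂μ := by
    have h : ∀ ω, (X ω - a) * (Y ω - b) = X ω * g ω - a * g ω := fun ω => by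
      rw [hgdef]; ring
    simp_rw [h]
    rw [integral_sub hXg (hgi.const_mul a), integral_const_mul, hg0, mul_zero, sub_zero]
  -- sign of g1
  set A := {ω | 0 ≤ g1 ω} with hAdef
  have hA : MeasurableSet[m1] A := measurableSet_le measurable_const hg1sm.measurable
  set δ : Ω → ℝ := fun ω => if ω ∈ A then 1 else -1 with hδdef
  have hδm1 : Measurable[m1] δ := Measurable.ite hA measurable_const measurable_const
  have hδsm : StronglyMeasurable[m1] δ := hδm1.stronglyMeasurable
  have hδb : ∀ ω, ‖δ ω‖ ≤ 1 := fun ω => by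
    rw [hδdef]; by_cases h : ω ∈ A <;> simp [h] <;> norm_num
  have hδi : Integrable δ μ := by
    refine Integrable.mono' (integrable_const (1 : ℝ) (μ := μ))
      ((hδm1.mono hm1 le_rfl).aestronglyMeasurable) (ae_of_all _ hδb)
  have hδg1 : ∀ ω, δ ω * g1 ω = |g1 ω| := fun ω => by
    rw [hδdef]
    by_cases h : ω ∈ A
    · have h0 : 0 ≤ g1 ω := h
      simp [h, abs_of_nonneg h0]
    · have h0 : g1 ω < 0 := lt_of_not_ge h
      simp [h, abs_of_neg h0]
  have hδg : Integrable (fun ω => δ ω * g ω) μ :=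
    hgi.bdd_mul ((hδm1.mono hm1 le_rfl).aestronglyMeasurable) (ae_of_all _ hδb)
  have E5 : ∫ ω, δ ω * g1 ω ∂μ = ∫ ω, δ ω * g ω ∂μ :=
    integral_mul_condexp_aux hm1 hδsm hδg hgi
  have E4 : ∫ ω, |g1 ω| ∂μ = ∫ ω, δ ω * g1 ω ∂μ :=
    integral_congr_ae (ae_of_all _ fun ω => (hδg1 ω).symm)
  -- step E3
  have E3 : |∫ ω, X ω * g1 ω ∂μ| ≤ Cx * ∫ ω, |g1 ω| ∂μ := by
    calc |∫ ω, X ω * g1 ω ∂μ| ≤ ∫ ω, |X ω * g1 ω| ∂μ := by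
          exact norm_integral_le_integral_norm (fun ω => X ω * g1 ω)
      _ ≤ ∫ ω, Cx * |g1 ω| ∂μ := by
          refine integral_mono_ae hXg1.abs (hg1i.abs.const_mul Cx) ?_
          filter_upwards [hXb] with ω h
          rw [abs_mul]
          exact mul_le_mul_of_nonneg_right h (abs_nonneg _)
      _ = Cx * ∫ ω, |g1 ω| ∂μ := integral_const_mul Cx _
  -- centered sign
  set c := ∫ ω, δ ω ∂μ with hcdef
  set e : Ω → ℝ := fun ω => δ ω - c with hedef
  have hei : Integrable e μ := hδi.sub (integrable_const c)
  have hδY : Integrable (fun ω => δ ω * Y ω) μ :=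
    hYi.bdd_mul ((hδm1.mono hm1 le_rfl).aestronglyMeasurable) (ae_of_all _ hδb)
  have E6a : ∫ ω, δ ω * g ω ∂μ = (∫ ω, δ ω * Y ω ∂μ) - c * b := by
    have h : ∀ ω, δ ω * g ω = δ ω * Y ω - δ ω * b := fun ω => by rw [hgdef]; ring
    simp_rw [h]
    rw [integral_sub hδY (hδi.mul_const b), integral_mul_const]
  have E6b : ∫ ω, e ω * Y ω ∂μ = (∫ ω, δ ω * Y ω ∂μ) - c * b := by
    have h : ∀ ω, e ω * Y ω = δ ω * Y ω - c * Y ω := fun ω => by rw [hedef]; ring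
    simp_rw [h]
    rw [integral_sub hδY (hYi.const_mul c), integral_const_mul]
  have E6 : ∫ ω, δ ω * g ω ∂μ = ∫ ω, e ω * Y ω ∂μ := by rw [E6a, E6b]
  -- conditional expectation of e on σ(Y)
  set k := μ[e|m2] with hkdef
  have hki : Integrable k μ := integrable_condExp
  have hksm : StronglyMeasurable[m2] k := stronglyMeasurable_condExp
  have hYe : Integrable (fun ω => Y ω * e ω) μ := hei.bdd_mul hY.aestronglyMeasurable hYb'
  have E7 : ∫ ω, Y ω * k ω ∂μ = ∫ ω, Y ω * e ω ∂μ :=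
    integral_mul_condexp_aux hm2 hYsm2 hYe hei
  have hYk : Integrable (fun ω => Y ω * k ω) μ := hki.bdd_mul hY.aestronglyMeasurable hYb'
  have E8 : |∫ ω, Y ω * k ω ∂μ| ≤ Cy * ∫ ω, |k ω| ∂μ := by
    calc |∫ ω, Y ω * k ω ∂μ| ≤ ∫ ω, |Y ω * k ω| ∂μ := by
          exact norm_integral_le_integral_norm (fun ω => Y ω * k ω)
      _ ≤ ∫ ω, Cy * |k ω| ∂μ := by
          refine integral_mono_ae hYk.abs (hki.abs.const_mul Cy) ?_
          filter_upwards [hYb] with ω h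
          rw [abs_mul]
          exact mul_le_mul_of_nonneg_right h (abs_nonneg _)
      _ = Cy * ∫ ω, |k ω| ∂μ := integral_const_mul Cy _
  -- sign of k
  set B := {ω | 0 ≤ k ω} with hBdef
  have hB : MeasurableSet[m2] B := measurableSet_le measurable_const hksm.measurable
  set δ' : Ω → ℝ := fun ω => if ω ∈ B then 1 else -1 with hδ'def
  have hδ'm2 : Measurable[m2] δ' := Measurable.ite hB measurable_const measurable_const
  have hδ'sm : StronglyMeasurable[m2] δ' := hδ'm2.stronglyMeasurable
  have hδ'b : ∀ ω, ‖δ' ω‖ ≤ 1 := fun ω => by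
    rw [hδ'def]; by_cases h : ω ∈ B <;> simp [h] <;> norm_num
  have hδ'i : Integrable δ' μ :=
    Integrable.mono' (integrable_const (1 : ℝ) (μ := μ))
      ((hδ'm2.mono hm2 le_rfl).aestronglyMeasurable) (ae_of_all _ hδ'b)
  have hδ'k : ∀ ω, δ' ω * k ω = |k ω| := fun ω => by
    rw [hδ'def]
    by_cases h : ω ∈ B
    · have h0 : 0 ≤ k ω := h
      simp [h, abs_of_nonneg h0]
    · have h0 : k ω < 0 := lt_of_not_ge h
      simp [h, abs_of_neg h0]
  have hδ'e : Integrable (fun ω => δ' ω * e ω) μ :=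
    hei.bdd_mul ((hδ'm2.mono hm2 le_rfl).aestronglyMeasurable) (ae_of_all _ hδ'b)
  have E9a : ∫ ω, |k ω| ∂μ = ∫ ω, δ' ω * k ω ∂μ :=
    integral_congr_ae (ae_of_all _ fun ω => (hδ'k ω).symm)
  have E9b : ∫ ω, δ' ω * k ω ∂μ = ∫ ω, δ' ω * e ω ∂μ :=
    integral_mul_condexp_aux hm2 hδ'sm hδ'e hei
  -- indicator computations
  set p := (μ A).toReal with hpdef
  set q := (μ B).toReal with hqdef
  set s := (μ (A ∩ B)).toReal with hsdef
  have hAint : Integrable (A.indicator fun _ => (1 : ℝ)) μ :=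
    indicator_one_integrable (hm1 _ hA)
  have hBint : Integrable (B.indicator fun _ => (1 : ℝ)) μ :=
    indicator_one_integrable (hm2 _ hB)
  have hABint : Integrable ((A ∩ B).indicator fun _ => (1 : ℝ)) μ :=
    indicator_one_integrable ((hm1 _ hA).inter (hm2 _ hB))
  have hIA : ∫ ω, A.indicator (fun _ => (1 : ℝ)) ω ∂μ = p := by
    exact integral_indicator_one' (hm1 _ hA)
  have hIB : ∫ ω, B.indicator (fun _ => (1 : ℝ)) ω ∂μ = q := by
    exact integral_indicator_one' (hm2 _ hB)
  have hIAB : ∫ ω, (A ∩ B).indicator (fun _ => (1 : ℝ)) ω ∂μ = s := by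
    exact integral_indicator_one' ((hm1 _ hA).inter (hm2 _ hB))
  have hδind : ∀ ω, δ ω = 2 * A.indicator (fun _ => (1 : ℝ)) ω - 1 := fun ω => by
    rw [hδdef]; by_cases h : ω ∈ A <;> simp [h] <;> norm_num
  have hδ'ind : ∀ ω, δ' ω = 2 * B.indicator (fun _ => (1 : ℝ)) ω - 1 := fun ω => by
    rw [hδ'def]; by_cases h : ω ∈ B <;> simp [h] <;> norm_num
  have hc : c = 2 * p - 1 := by
    rw [hcdef]
    simp_rw [hδind]
    rw [integral_sub (hAint.const_mul 2) (integrable_const (1:ℝ) (μ := μ)), integral_const_mul, hIA,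
      integral_const, probReal_univ]
    simp
  have hIδ' : ∫ ω, δ' ω ∂μ = 2 * q - 1 := by
    simp_rw [hδ'ind]
    rw [integral_sub (hBint.const_mul 2) (integrable_const (1:ℝ) (μ := μ)), integral_const_mul, hIB,
      integral_const, probReal_univ]
    simp
  have hδ'δind : ∀ ω, δ' ω * δ ω =
      4 * (A ∩ B).indicator (fun _ => (1 : ℝ)) ω - 2 * A.indicator (fun _ => (1 : ℝ)) ω
        - 2 * B.indicator (fun _ => (1 : ℝ)) ω + 1 := fun ω => by
    rw [hδdef, hδ'def]
    by_cases h1 : ω ∈ A <;> by_cases h2 : ω ∈ B <;>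
      simp [h1, h2, Set.indicator_apply, Set.mem_inter_iff] <;> norm_num
  have hδ'δi : Integrable (fun ω => δ' ω * δ ω) μ :=
    hδi.bdd_mul ((hδ'm2.mono hm2 le_rfl).aestronglyMeasurable) (ae_of_all _ hδ'b)
  have hIδ'δ : ∫ ω, δ' ω * δ ω ∂μ = 4 * s - 2 * p - 2 * q + 1 := by
    have i1 : Integrable (fun ω => 4 * (A ∩ B).indicator (fun _ => (1 : ℝ)) ω) μ :=
      hABint.const_mul 4
    have i2 : Integrable (fun ω => 2 * A.indicator (fun _ => (1 : ℝ)) ω) μ :=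
      hAint.const_mul 2
    have i3 : Integrable (fun ω => 2 * B.indicator (fun _ => (1 : ℝ)) ω) μ :=
      hBint.const_mul 2
    have i12 : Integrable (fun ω => 4 * (A ∩ B).indicator (fun _ => (1 : ℝ)) ω
        - 2 * A.indicator (fun _ => (1 : ℝ)) ω) μ := i1.sub i2
    have i123 : Integrable (fun ω => 4 * (A ∩ B).indicator (fun _ => (1 : ℝ)) ω
        - 2 * A.indicator (fun _ => (1 : ℝ)) ω - 2 * B.indicator (fun _ => (1 : ℝ)) ω) μ :=
      i12.sub i3
    simp_rw [hδ'δind]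
    rw [integral_add i123 (integrable_const (1:ℝ) (μ := μ)),
      integral_sub i12 i3, integral_sub i1 i2,
      integral_const_mul, integral_const_mul, integral_const_mul, hIA, hIB, hIAB,
      integral_const, probReal_univ]
    simp
  have E10 : ∫ ω, δ' ω * e ω ∂μ = 4 * (s - p * q) := by
    have h : ∀ ω, δ' ω * e ω = δ' ω * δ ω - c * δ' ω := fun ω => by rw [hedef]; ring
    simp_rw [h]
    rw [integral_sub hδ'δi (hδ'i.const_mul c), integral_const_mul, hIδ'δ, hIδ', hc]
    ring
  -- mixing bound
  have E11 : 4 * (s - p * q) ≤ 4 * α := by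
    have h1 : |p * q - s| ≤ α := alphaMixR_ge (μ := μ) hA hB
    have h2 : s - p * q ≤ |p * q - s| := by
      rw [abs_sub_comm]; exact le_abs_self _
    linarith
  have chain1 : ∫ ω, |k ω| ∂μ ≤ 4 * α := by
    rw [E9a, E9b, E10]; exact E11
  have chain2 : ∫ ω, |g1 ω| ∂μ ≤ Cy * (4 * α) := by
    have h1 : ∫ ω, |g1 ω| ∂μ = ∫ ω, Y ω * k ω ∂μ := by
      rw [E4, E5, E6, E7]
      exact integral_congr_ae (ae_of_all _ fun ω => mul_comm (e ω) (Y ω))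
    calc ∫ ω, |g1 ω| ∂μ = ∫ ω, Y ω * k ω ∂μ := h1
      _ ≤ |∫ ω, Y ω * k ω ∂μ| := le_abs_self _
      _ ≤ Cy * ∫ ω, |k ω| ∂μ := E8
      _ ≤ Cy * (4 * α) := mul_le_mul_of_nonneg_left chain1 hCy0
  calc |∫ ω, (X ω - a) * (Y ω - b) ∂μ| = |∫ ω, X ω * g1 ω ∂μ| := by rw [E1, ← E2]
    _ ≤ Cx * ∫ ω, |g1 ω| ∂μ := E3
    _ ≤ Cx * (Cy * (4 * α)) := mul_le_mul_of_nonneg_left chain2 hCx0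
    _ = 4 * α * Cx * Cy := by ring
end
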